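/- arXiv:2010.15515 — 3 statements merged into one kernel-verified Lean document; each statement's English description precedes it below -/
import Mathlib

section
/- (Key identity in the proof of Proposition 1) Let T be a probability tree and θ ∈ Θ_T. Then for every root-to-leaf path x: ∏_{i=1}^k θ_{iκ_i}^{α_{iκ_i}(x)} = N_1(θ) · ∏_{i=1}^k ∏_{j=1}^{κ_i−1} (N_{ij}(θ)/N_i(θ))^{α_{ij}(x)}, where θ_{iκ_i} = 1 − Σ_{j=1}^{κ_i−1} θ_{ij} is the label of the downward edge of v_i. -/
namespace StagedTrees

/-- A finite directed rooted tree in which every inner vertex has at least two children. -/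
inductive Tree : Type where
  | leaf : Tree
  | node : (κ : ℕ) → 2 ≤ κ → (Fin κ → Tree) → Tree

/-- Reindex a label function `θ` to the subtree rooted at the vertex with address `v`. -/
def shift (θ : List ℕ → ℕ → ℝ) (v : List ℕ) : List ℕ → ℕ → ℝ :=
  fun w j => θ (v ++ w) j

/-- The number of outgoing edges of the vertex with address `v` (`0` for leaves and
invalid addresses). -/
def degree : Tree → List ℕ → ℕ
  | .leaf, _ => 0
  | .node κ _ _, [] => κ
  | .node κ _ c, a :: v => if h : a < κ then degree (c ⟨a, h⟩) v else 0

/-- The subtree rooted at the vertex with address `v`. -/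
def subtreeAt : Tree → List ℕ → Tree
  | t, [] => t
  | .leaf, _ :: _ => .leaf
  | .node κ _ c, a :: v => if h : a < κ then subtreeAt (c ⟨a, h⟩) v else .leaf

/-- `v` is the address of a vertex of the tree. -/
def isValid : Tree → List ℕ → Prop
  | _, [] => True
  | .leaf, _ :: _ => False
  | .node κ _ c, a :: v => ∃ h : a < κ, isValid (c ⟨a, h⟩) v

/-- The list of all root-to-leaf paths of the tree, encoded as lists of edge indices. -/
def leaves : Tree → List (List ℕ)
  | .leaf => [[]]
  | .node κ _ c => (List.finRange κ).flatMap fun a => (leaves (c a)).map (a.val :: ·)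

/-- The atomic probability of a root-to-leaf path: the product of the labels of the
edges along the path. -/
def prob (θ : List ℕ → ℕ → ℝ) : Tree → List ℕ → ℝ
  | .leaf, [] => 1
  | .leaf, _ :: _ => 0
  | .node _ _ _, [] => 0
  | .node κ _ c, a :: x =>
      if h : a < κ then θ [] a * prob (shift θ [a]) (c ⟨a, h⟩) x else 0

/-- `θ` is an admissible labelling: at every inner vertex all labels lie in `(0,1)` and
sum to one. -/
def Admissible (θ : List ℕ → ℕ → ℝ) : Tree → Prop
  | .leaf => True
  | .node κ _ c =>
      (∀ j : Fin κ, θ [] (j : ℕ) ∈ Set.Ioo (0 : ℝ) 1) ∧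
      (∑ j : Fin κ, θ [] (j : ℕ)) = 1 ∧
      ∀ a : Fin κ, Admissible (shift θ [(a : ℕ)]) (c a)

/-- The product of the labels along the all-downward path from the root of the tree to a
leaf, where the downward edge of a vertex with `κ` outgoing edges is the edge with
index `κ - 1`. -/
def N (θ : List ℕ → ℕ → ℝ) : Tree → ℝ
  | .leaf => 1
  | .node κ h c => θ [] (κ - 1) * N (shift θ [κ - 1]) (c ⟨κ - 1, by omega⟩)

/-- `N` of the vertex with address `v`. -/
def Nvert (θ : List ℕ → ℕ → ℝ) (T : Tree) (v : List ℕ) : ℝ :=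
  N (shift θ v) (subtreeAt T v)


/-- The product `∏_i θ_{iκ_i}^{α_{iκ_i}(x)}` of the labels of the downward edges
traversed by the path `x`. -/
def downProd (θ : List ℕ → ℕ → ℝ) : Tree → List ℕ → ℝ
  | .leaf, _ => 1
  | .node _ _ _, [] => 1
  | .node κ _ c, a :: x =>
      if h : a < κ then
        (if a = κ - 1 then θ [] a else 1) * downProd (shift θ [a]) (c ⟨a, h⟩) x
      else 1

/-- The product `∏_i ∏_{j<κ_i-1} (N_{ij}(θ)/N_i(θ))^{α_{ij}(x)}` along the path `x`. -/
noncomputable def ratioProd (θ : List ℕ → ℕ → ℝ) : Tree → List ℕ → ℝ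
  | .leaf, _ => 1
  | .node _ _ _, [] => 1
  | .node κ hκ c, a :: x =>
      if h : a < κ then
        (if a = κ - 1 then 1
          else N (shift θ [a]) (c ⟨a, h⟩) / N θ (.node κ hκ c)) *
          ratioProd (shift θ [a]) (c ⟨a, h⟩) x
      else 1

theorem N_pos (T : Tree) (θ : List ℕ → ℕ → ℝ) (hθ : Admissible θ T) : 0 < N θ T := by
  induction T generalizing θ with
  | leaf => simp [N]
  | node κ hκ c ih =>
    obtain ⟨h1, _, h3⟩ := hθ
    have hlt : κ - 1 < κ := by omega
    have := (h1 ⟨κ - 1, hlt⟩).1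
    exact mul_pos this (ih _ _ (h3 ⟨κ - 1, hlt⟩))

/-- key identity in the proof of Proposition 1. For every admissible
`θ` and every root-to-leaf path `x`,
`∏_i θ_{iκ_i}^{α_{iκ_i}(x)} = N_1(θ) · ∏_i ∏_{j<κ_i-1} (N_{ij}(θ)/N_i(θ))^{α_{ij}(x)}`,
where, thanks to admissibility, the downward label `θ_{iκ_i}` equals
`1 - Σ_{j<κ_i-1} θ_{ij}`. -/
theorem key_identity (T : Tree) (θ : List ℕ → ℕ → ℝ) (hθ : Admissible θ T) :
    ∀ x ∈ leaves T, downProd θ T x = N θ T * ratioProd θ T x := by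
  induction T generalizing θ with
  | leaf =>
    intro x hx
    simp [leaves] at hx
    subst hx
    simp [downProd, N, ratioProd]
  | node κ hκ c ih =>
    intro x hx
    simp only [leaves, List.mem_flatMap, List.mem_map, List.mem_finRange] at hx
    obtain ⟨a, -, y, hy, rfl⟩ := hx
    obtain ⟨h1, h2, h3⟩ := hθ
    have ha : (a : ℕ) < κ := a.isLt
    have ihy := ih a (shift θ [(a : ℕ)]) (h3 a) y hy
    simp only [downProd, ratioProd, dif_pos ha]
    have hfin : (⟨(a : ℕ), ha⟩ : Fin κ) = a := rfl
    rw [hfin, ihy]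
    by_cases hcase : (a : ℕ) = κ - 1
    · simp only [if_pos hcase]
      have hNeq : N θ (.node κ hκ c) = θ [] (κ - 1) * N (shift θ [κ - 1]) (c ⟨κ - 1, by omega⟩) := rfl
      rw [hNeq]
      have hc : c a = c ⟨κ - 1, by omega⟩ := by congr 1; exact Fin.ext hcase
      rw [hc]; simp only [hcase]; ring
    · simp only [if_neg hcase]
      have hNpos : 0 < N θ (.node κ hκ c) :=
        N_pos _ θ ⟨h1, h2, h3⟩
      field_simp

end StagedTrees
end

section
/- (Proposition 1, regularity) Let T be a probability tree and d = Σ_{i=1}^k (κ_i − 1). The map η : Θ_T → ℝ^d with coordinates η_{ij}(θ) = log(θ_{ij} N_{ij}(θ)/N_i(θ)), for j = 1,…,κ_i−1 and i = 1,…,k, is a diffeomorphism onto ℝ^d: it is smooth, bijective, and has a smooth inverse. In particular the natural parameter space of the probability tree model is all of ℝ^d, so the model is a regular exponential family of dimension d. -/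
namespace StagedTrees

/-- The free coordinates of a probability tree: pairs `(v, j)` where `v` is the address
of an inner vertex with `κ_v` outgoing edges and `j < κ_v - 1` (the downward edge
`j = κ_v - 1` is not free). -/
abbrev FreeCoord (T : Tree) : Type :=
  {q : List ℕ × ℕ // q.2 + 1 < degree T q.1}

/-- Extend a vector `y` of free coordinates to a full labelling of the tree: the
label of the downward edge at any inner vertex `v` is `1 - Σ_{j<κ_v-1} θ_{vj}`. -/
noncomputable def fill (T : Tree) {d : ℕ} (e : Fin d ≃ FreeCoord T) (y : Fin d → ℝ) :
    List ℕ → ℕ → ℝ := fun v j =>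
  if h : j + 1 < degree T v then y (e.symm ⟨(v, j), h⟩)
  else if j + 1 = degree T v then
    1 - ∑ i : Fin d, (if (e i).val.1 = v then y i else 0)
  else 0

/-- The parameter space `Θ_T` of the probability tree, as a subset of `ℝ^d` in the free
coordinates. -/
noncomputable def Theta0 (T : Tree) {d : ℕ} (e : Fin d ≃ FreeCoord T) :
    Set (Fin d → ℝ) :=
  {y | Admissible (fill T e y) T}

/-- The canonical parameter map `η : Θ_T → ℝ^d`,
`η_{ij}(θ) = log(θ_{ij} N_{ij}(θ)/N_i(θ))`. -/
noncomputable def etaMap (T : Tree) {d : ℕ} (e : Fin d ≃ FreeCoord T)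
    (y : Fin d → ℝ) : Fin d → ℝ := fun i =>
  Real.log (fill T e y (e i).val.1 (e i).val.2 *
    Nvert (fill T e y) T ((e i).val.1 ++ [(e i).val.2]) /
      Nvert (fill T e y) T (e i).val.1)


/-! ### Auxiliary development -/

theorem shift_nil (θ : List ℕ → ℕ → ℝ) : shift θ [] = θ := rfl

theorem shift_shift (θ : List ℕ → ℕ → ℝ) (u w : List ℕ) :
    shift (shift θ u) w = shift θ (u ++ w) := by
  funext x j; simp [shift, List.append_assoc]

theorem shift_cons (θ : List ℕ → ℕ → ℝ) (a : ℕ) (w : List ℕ) :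
    shift θ (a :: w) = shift (shift θ [a]) w := by
  rw [shift_shift]; rfl

/-- `N` of the softmax-style inverse labelling, computed directly from `η`. -/
noncomputable def Ninv : Tree → (List ℕ → ℕ → ℝ) → ℝ
  | .leaf, _ => 1
  | .node κ hκ c, η =>
      (1 / (1 + ∑ a : Fin κ, if a.val + 1 < κ then
          Real.exp (η [] a.val) * Ninv (c ⟨κ - 1, by omega⟩) (shift η [κ - 1]) /
            Ninv (c a) (shift η [a.val]) else 0)) *
        Ninv (c ⟨κ - 1, by omega⟩) (shift η [κ - 1])

/-- The denominator of the softmax at the root of a node. -/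
noncomputable def Dinv (κ : ℕ) (hκ : 2 ≤ κ) (c : Fin κ → Tree) (η : List ℕ → ℕ → ℝ) : ℝ :=
  1 + ∑ a : Fin κ, if a.val + 1 < κ then
      Real.exp (η [] a.val) * Ninv (c ⟨κ - 1, by omega⟩) (shift η [κ - 1]) /
        Ninv (c a) (shift η [a.val]) else 0

theorem Ninv_node (κ : ℕ) (hκ : 2 ≤ κ) (c : Fin κ → Tree) (η : List ℕ → ℕ → ℝ) :
    Ninv (.node κ hκ c) η
      = (1 / Dinv κ hκ c η) * Ninv (c ⟨κ - 1, by omega⟩) (shift η [κ - 1]) := rfl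

/-- The inverse labelling: at each vertex the labels are a softmax of the canonical
parameters corrected by the `N`-values of the children. -/
noncomputable def invFill : Tree → (List ℕ → ℕ → ℝ) → List ℕ → ℕ → ℝ
  | .leaf, _, _, _ => 0
  | .node κ hκ c, η, a :: v, j =>
      if h : a < κ then invFill (c ⟨a, h⟩) (shift η [a]) v j else 0
  | .node κ hκ c, η, [], j =>
      if hj : j + 1 < κ then
        (Real.exp (η [] j) * Ninv (c ⟨κ - 1, by omega⟩) (shift η [κ - 1]) /
            Ninv (c ⟨j, by omega⟩) (shift η [j])) / Dinv κ hκ c η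
      else if j + 1 = κ then 1 / Dinv κ hκ c η
      else 0

theorem Ninv_pos (t : Tree) (η : List ℕ → ℕ → ℝ) : 0 < Ninv t η := by
  induction t generalizing η with
  | leaf => norm_num [Ninv]
  | node κ hκ c ih =>
      rw [Ninv_node]
      have hs : (0:ℝ) ≤ ∑ a : Fin κ, if a.val + 1 < κ then
          Real.exp (η [] a.val) * Ninv (c ⟨κ - 1, by omega⟩) (shift η [κ - 1]) /
            Ninv (c a) (shift η [a.val]) else 0 :=
        Finset.sum_nonneg fun a _ => by
          split
          · exact div_nonneg (mul_nonneg (Real.exp_pos _).le (ih _ _).le) (ih _ _).le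
          · exact le_rfl
      have hD : 0 < Dinv κ hκ c η := by unfold Dinv; linarith
      exact mul_pos (by positivity) (ih _ _)

theorem Dinv_one_le (κ : ℕ) (hκ : 2 ≤ κ) (c : Fin κ → Tree) (η : List ℕ → ℕ → ℝ) :
    1 ≤ Dinv κ hκ c η := by
  have hs : (0:ℝ) ≤ ∑ a : Fin κ, if a.val + 1 < κ then
      Real.exp (η [] a.val) * Ninv (c ⟨κ - 1, by omega⟩) (shift η [κ - 1]) /
        Ninv (c a) (shift η [a.val]) else 0 :=
    Finset.sum_nonneg fun a _ => by
      split
      · exact div_nonneg (mul_nonneg (Real.exp_pos _).le (Ninv_pos _ _).le) (Ninv_pos _ _).le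
      · exact le_rfl
  unfold Dinv; linarith

theorem Dinv_pos (κ : ℕ) (hκ : 2 ≤ κ) (c : Fin κ → Tree) (η : List ℕ → ℕ → ℝ) :
    0 < Dinv κ hκ c η := lt_of_lt_of_le one_pos (Dinv_one_le κ hκ c η)

theorem shift_invFill (κ : ℕ) (hκ : 2 ≤ κ) (c : Fin κ → Tree) (η : List ℕ → ℕ → ℝ)
    (a : ℕ) (h : a < κ) :
    shift (invFill (.node κ hκ c) η) [a] = invFill (c ⟨a, h⟩) (shift η [a]) := by
  funext w j
  show invFill (.node κ hκ c) η (a :: w) j = _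
  rw [invFill]
  simp [h]

theorem N_invFill (t : Tree) (η : List ℕ → ℕ → ℝ) : N (invFill t η) t = Ninv t η := by
  induction t generalizing η with
  | leaf => rfl
  | node κ hκ c ih =>
      rw [N, Ninv_node, shift_invFill κ hκ c η (κ - 1) (by omega)]
      rw [ih _ _]
      congr 1
      show invFill (.node κ hκ c) η [] (κ - 1) = _
      rw [invFill]
      have h1 : ¬ (κ - 1 + 1 < κ) := by omega
      have h2 : κ - 1 + 1 = κ := by omega
      simp [h1, h2]

theorem invFill_zero (t : Tree) (η : List ℕ → ℕ → ℝ) (v : List ℕ) (j : ℕ)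
    (h : ¬ j < degree t v) : invFill t η v j = 0 := by
  induction t generalizing η v with
  | leaf => rfl
  | node κ hκ c ih =>
      cases v with
      | nil =>
          simp only [degree] at h
          rw [invFill]
          have h1 : ¬ (j + 1 < κ) := by omega
          have h2 : ¬ (j + 1 = κ) := by omega
          simp [h1, h2]
      | cons a w =>
          rw [invFill]
          by_cases ha : a < κ
          · rw [dif_pos ha]
            apply ih
            simpa only [degree, dif_pos ha] using h
          · rw [dif_neg ha]

theorem invFill_node_last (κ : ℕ) (hκ : 2 ≤ κ) (c : Fin κ → Tree) (η : List ℕ → ℕ → ℝ) :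
    invFill (.node κ hκ c) η [] (κ - 1) = 1 / Dinv κ hκ c η := by
  rw [invFill]
  have h1 : ¬ (κ - 1 + 1 < κ) := by omega
  have h2 : κ - 1 + 1 = κ := by omega
  simp [h1, h2]

theorem invFill_sum (t : Tree) (η : List ℕ → ℕ → ℝ) (v : List ℕ) (κv : ℕ)
    (hdeg : degree t v = κv) (hκv : 2 ≤ κv) :
    ∑ j ∈ Finset.range (κv - 1), invFill t η v j = 1 - invFill t η v (κv - 1) := by
  induction t generalizing η v with
  | leaf => simp only [degree] at hdeg; omega
  | node κ hκ c ih =>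
      cases v with
      | nil =>
          simp only [degree] at hdeg
          subst hdeg
          rw [invFill_node_last]
          set g : ℕ → ℝ := fun n => if h : n + 1 < κ then
            Real.exp (η [] n) * Ninv (c ⟨κ - 1, by omega⟩) (shift η [κ - 1]) /
              Ninv (c ⟨n, by omega⟩) (shift η [n]) else 0 with hg
          have hterm : ∀ j ∈ Finset.range (κ - 1),
              invFill (.node κ hκ c) η [] j = g j / Dinv κ hκ c η := by
            intro j hj
            rw [Finset.mem_range] at hj
            rw [invFill, dif_pos (show j + 1 < κ by omega)]
            simp only [hg]
            rw [dif_pos (show j + 1 < κ by omega)]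
          rw [Finset.sum_congr rfl hterm, ← Finset.sum_div]
          have hD : Dinv κ hκ c η ≠ 0 := (Dinv_pos κ hκ c η).ne'
          have hDeq : Dinv κ hκ c η = 1 + ∑ j ∈ Finset.range (κ - 1), g j := by
            unfold Dinv
            congr 1
            have step1 : ∀ a : Fin κ, (if a.val + 1 < κ then
                Real.exp (η [] a.val) * Ninv (c ⟨κ - 1, by omega⟩) (shift η [κ - 1]) /
                  Ninv (c a) (shift η [a.val]) else 0) = g a.val := by
              intro a
              by_cases h : a.val + 1 < κ
              · rw [if_pos h]
                simp only [hg]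
                rw [dif_pos h]
              · rw [if_neg h]
                simp only [hg]
                rw [dif_neg h]
            rw [Finset.sum_congr rfl (fun a _ => step1 a),
              Fin.sum_univ_eq_sum_range g κ]
            have hsplit : κ - 1 + 1 = κ := by omega
            have hss := Finset.sum_range_succ g (κ - 1)
            rw [hsplit] at hss
            have hglast : g (κ - 1) = 0 := by
              simp only [hg]
              rw [dif_neg (show ¬ (κ - 1 + 1 < κ) by omega)]
            rw [hss, hglast]
            ring
          rw [hDeq]
          have h0 : (1:ℝ) + ∑ j ∈ Finset.range (κ - 1), g j ≠ 0 := by rw [← hDeq]; exact hD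
          field_simp
          ring
      | cons a w =>
          simp only [degree] at hdeg
          have ha : a < κ := by by_contra hc; simp [hc] at hdeg; omega
          rw [dif_pos ha] at hdeg
          have key : ∀ j, invFill (.node κ hκ c) η (a :: w) j
              = invFill (c ⟨a, ha⟩) (shift η [a]) w j := by
            intro j; rw [invFill, dif_pos ha]
          simp only [key]
          exact ih _ _ _ hdeg

theorem invFill_mem_Ioo (t : Tree) (η : List ℕ → ℕ → ℝ) (v : List ℕ) (j : ℕ)
    (h : j < degree t v) : invFill t η v j ∈ Set.Ioo (0:ℝ) 1 := by
  induction t generalizing η v with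
  | leaf => simp only [degree] at h; omega
  | node κ hκ c ih =>
      cases v with
      | nil =>
          simp only [degree] at h
          have hD1 : 1 ≤ Dinv κ hκ c η := Dinv_one_le κ hκ c η
          have hD : 0 < Dinv κ hκ c η := Dinv_pos κ hκ c η
          by_cases hj : j + 1 < κ
          · rw [invFill, dif_pos hj]
            constructor
            · apply div_pos _ hD
              exact div_pos (mul_pos (Real.exp_pos _) (Ninv_pos _ _)) (Ninv_pos _ _)
            · rw [div_lt_one hD]
              -- the term is one of the summands of `Dinv - 1`
              have hle : Real.exp (η [] j) * Ninv (c ⟨κ - 1, by omega⟩) (shift η [κ - 1]) /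
                  Ninv (c ⟨j, by omega⟩) (shift η [j]) ≤ Dinv κ hκ c η - 1 := by
                unfold Dinv
                rw [add_sub_cancel_left]
                have := Finset.single_le_sum (f := fun a : Fin κ => if a.val + 1 < κ then
                    Real.exp (η [] a.val) * Ninv (c ⟨κ - 1, by omega⟩) (shift η [κ - 1]) /
                      Ninv (c a) (shift η [a.val]) else 0)
                  (fun a _ => by
                    split
                    · exact div_nonneg (mul_nonneg (Real.exp_pos _).le (Ninv_pos _ _).le)
                        (Ninv_pos _ _).le
                    · exact le_rfl)
                  (Finset.mem_univ (⟨j, by omega⟩ : Fin κ))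
                simpa [hj] using this
              linarith
          · rw [invFill, dif_neg hj]
            by_cases hj2 : j + 1 = κ
            · rw [if_pos hj2]
              constructor
              · positivity
              · rw [div_lt_one hD]
                -- D > 1 since the sum has a positive term (κ ≥ 2 gives index 0 free)
                have hpos : (0:ℝ) < ∑ a : Fin κ, if a.val + 1 < κ then
                    Real.exp (η [] a.val) * Ninv (c ⟨κ - 1, by omega⟩) (shift η [κ - 1]) /
                      Ninv (c a) (shift η [a.val]) else 0 := by
                  apply Finset.sum_pos'
                  · intro a _
                    split
                    · exact div_nonneg (mul_nonneg (Real.exp_pos _).le (Ninv_pos _ _).le)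
                        (Ninv_pos _ _).le
                    · exact le_rfl
                  · refine ⟨⟨0, by omega⟩, Finset.mem_univ _, ?_⟩
                    rw [if_pos (by simpa using by omega : (0:ℕ) + 1 < κ)]
                    exact div_pos (mul_pos (Real.exp_pos _) (Ninv_pos _ _)) (Ninv_pos _ _)
                unfold Dinv
                linarith
            · omega
      | cons a w =>
          have ha : a < κ := by
            by_contra hc
            simp only [degree, dif_neg hc] at h
            omega
          simp only [degree, dif_pos ha] at h
          rw [invFill, dif_pos ha]
          exact ih _ _ _ h

theorem Admissible_invFill (t : Tree) (η : List ℕ → ℕ → ℝ) : Admissible (invFill t η) t := by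
  induction t generalizing η with
  | leaf => trivial
  | node κ hκ c ih =>
      refine ⟨?_, ?_, ?_⟩
      · intro j
        exact invFill_mem_Ioo _ _ [] j.val (by simpa [degree] using j.isLt)
      · -- sum over all labels is 1
        have hsum := invFill_sum (.node κ hκ c) η [] κ (by simp [degree]) hκ
        have hconv : ∑ j : Fin κ, invFill (.node κ hκ c) η [] j.val
            = ∑ j ∈ Finset.range κ, invFill (.node κ hκ c) η [] j :=
          Fin.sum_univ_eq_sum_range _ κ
        rw [hconv]
        have hsplit : κ - 1 + 1 = κ := by omega
        have hss := Finset.sum_range_succ (fun j => invFill (.node κ hκ c) η [] j) (κ - 1)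
        rw [hsplit] at hss
        rw [hss, hsum]
        ring
      · intro a
        rw [shift_invFill κ hκ c η a.val a.isLt]
        have : (⟨a.val, a.isLt⟩ : Fin κ) = a := rfl
        rw [this]
        exact ih a _

theorem subtreeAt_append (t : Tree) (u w : List ℕ) :
    subtreeAt t (u ++ w) = subtreeAt (subtreeAt t u) w := by
  induction u generalizing t with
  | nil => rw [List.nil_append]; cases t <;> rfl
  | cons a u ih =>
      cases t with
      | leaf =>
          show subtreeAt Tree.leaf (a :: (u ++ w)) = subtreeAt (subtreeAt Tree.leaf (a :: u)) w
          rw [subtreeAt, subtreeAt]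
          cases w with
          | nil => rfl
          | cons b w => rw [subtreeAt]
      | node κ hκ c =>
          show subtreeAt (Tree.node κ hκ c) (a :: (u ++ w)) = _
          rw [subtreeAt, subtreeAt]
          by_cases ha : a < κ
          · rw [dif_pos ha, dif_pos ha, ih]
          · rw [dif_neg ha, dif_neg ha]
            cases w with
            | nil => rfl
            | cons b w => rw [subtreeAt]

theorem subtreeAt_leaf (v : List ℕ) : subtreeAt Tree.leaf v = Tree.leaf := by
  cases v with
  | nil => rfl
  | cons a w => rw [subtreeAt]

theorem degree_subtreeAt (t : Tree) (v : List ℕ) :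
    degree t v = degree (subtreeAt t v) [] := by
  induction t generalizing v with
  | leaf => rw [subtreeAt_leaf]; cases v <;> rfl
  | node κ hκ c ih =>
      cases v with
      | nil => rfl
      | cons a w =>
          rw [degree, subtreeAt]
          by_cases ha : a < κ
          · rw [dif_pos ha, dif_pos ha, ih]
          · rw [dif_neg ha, dif_neg ha]; rfl

theorem shift_invFill_gen (t : Tree) (η : List ℕ → ℕ → ℝ) (v : List ℕ) :
    shift (invFill t η) v = invFill (subtreeAt t v) (shift η v) := by
  induction v generalizing t η with
  | nil => rw [shift_nil, shift_nil]; cases t <;> rfl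
  | cons a w ih =>
      cases t with
      | leaf =>
          funext u j
          show invFill Tree.leaf η ((a :: w) ++ u) j = _
          rw [subtreeAt_leaf]
          rfl
      | node κ hκ c =>
          by_cases ha : a < κ
          · rw [shift_cons, shift_invFill κ hκ c η a ha, ih]
            rw [show subtreeAt (Tree.node κ hκ c) (a :: w) = subtreeAt (c ⟨a, ha⟩) w by
              rw [subtreeAt, dif_pos ha]]
            rw [shift_cons η a w]
          · funext u j
            show invFill (Tree.node κ hκ c) η ((a :: w) ++ u) j = _
            rw [show subtreeAt (Tree.node κ hκ c) (a :: w) = Tree.leaf by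
              rw [subtreeAt, dif_neg ha]]
            have h0 : invFill (Tree.node κ hκ c) η (a :: (w ++ u)) j = 0 := by
              rw [invFill, dif_neg ha]
            rw [show ((a :: w) ++ u) = a :: (w ++ u) from rfl, h0]
            rfl

theorem subtreeAt_nil (t : Tree) : subtreeAt t [] = t := by cases t <;> rfl

theorem Admissible_mem_Ioo (t : Tree) (θ : List ℕ → ℕ → ℝ) (hθ : Admissible θ t)
    (v : List ℕ) (j : ℕ) (h : j < degree t v) : θ v j ∈ Set.Ioo (0:ℝ) 1 := by
  induction t generalizing θ v with
  | leaf => simp only [degree] at h; omega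
  | node κ hκ c ih =>
      cases v with
      | nil =>
          simp only [degree] at h
          exact hθ.1 ⟨j, h⟩
      | cons a w =>
          have ha : a < κ := by
            by_contra hc
            simp only [degree, dif_neg hc] at h
            omega
          simp only [degree, dif_pos ha] at h
          exact ih ⟨a, ha⟩ _ (hθ.2.2 ⟨a, ha⟩) w h

theorem Admissible_shift (t : Tree) (θ : List ℕ → ℕ → ℝ) (hθ : Admissible θ t)
    (v : List ℕ) : Admissible (shift θ v) (subtreeAt t v) := by
  induction v generalizing t θ with
  | nil => rw [shift_nil, subtreeAt_nil]; exact hθ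
  | cons a w ih =>
      cases t with
      | leaf => rw [subtreeAt_leaf]; trivial
      | node κ hκ c =>
          by_cases ha : a < κ
          · rw [shift_cons, show subtreeAt (Tree.node κ hκ c) (a :: w)
                = subtreeAt (c ⟨a, ha⟩) w from by rw [subtreeAt, dif_pos ha]]
            exact ih _ _ (hθ.2.2 ⟨a, ha⟩)
          · rw [show subtreeAt (Tree.node κ hκ c) (a :: w) = Tree.leaf from by
              rw [subtreeAt, dif_neg ha]]
            trivial

theorem N_pos_admissible (t : Tree) (θ : List ℕ → ℕ → ℝ) (hθ : Admissible θ t) :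
    0 < N θ t := by
  induction t generalizing θ with
  | leaf => norm_num [N]
  | node κ hκ c ih =>
      rw [N]
      exact mul_pos (hθ.1 ⟨κ - 1, by omega⟩).1 (ih ⟨κ - 1, by omega⟩ _ (hθ.2.2 ⟨κ - 1, by omega⟩))

theorem N_congr (t : Tree) (θ₁ θ₂ : List ℕ → ℕ → ℝ)
    (h : ∀ v j, j < degree t v → θ₁ v j = θ₂ v j) : N θ₁ t = N θ₂ t := by
  induction t generalizing θ₁ θ₂ with
  | leaf => rfl
  | node κ hκ c ih =>
      rw [N, N]
      have h1 : θ₁ [] (κ - 1) = θ₂ [] (κ - 1) := h [] (κ - 1) (by simp [degree]; omega)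
      have h2 : N (shift θ₁ [κ - 1]) (c ⟨κ - 1, by omega⟩)
          = N (shift θ₂ [κ - 1]) (c ⟨κ - 1, by omega⟩) := by
        apply ih
        intro v j hj
        apply h ((κ - 1) :: v) j
        simp only [degree]
        rw [dif_pos (show κ - 1 < κ by omega)]
        exact hj
      rw [h1, h2]

/-- The canonical parameters as a full labelling-indexed function. -/
noncomputable def etaF (θ : List ℕ → ℕ → ℝ) (t : Tree) : List ℕ → ℕ → ℝ := fun v j =>
  if j + 1 < degree t v then
    Real.log (θ v j * Nvert θ t (v ++ [j]) / Nvert θ t v)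
  else 0

theorem shift_etaF (κ : ℕ) (hκ : 2 ≤ κ) (c : Fin κ → Tree) (θ : List ℕ → ℕ → ℝ)
    (a : ℕ) (ha : a < κ) :
    shift (etaF θ (.node κ hκ c)) [a] = etaF (shift θ [a]) (c ⟨a, ha⟩) := by
  funext w j
  show etaF θ (.node κ hκ c) (a :: w) j = etaF (shift θ [a]) (c ⟨a, ha⟩) w j
  have hdeg : degree (.node κ hκ c) (a :: w) = degree (c ⟨a, ha⟩) w := by
    simp only [degree, dif_pos ha]
  have hsub : subtreeAt (.node κ hκ c) (a :: w) = subtreeAt (c ⟨a, ha⟩) w := by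
    rw [subtreeAt, dif_pos ha]
  have hsub2 : subtreeAt (.node κ hκ c) (a :: (w ++ [j])) = subtreeAt (c ⟨a, ha⟩) (w ++ [j]) := by
    rw [subtreeAt, dif_pos ha]
  simp only [etaF, Nvert, List.cons_append]
  rw [hdeg, hsub, hsub2, shift_cons θ a w, shift_cons θ a (w ++ [j])]
  rfl

theorem invFill_etaF (t : Tree) (θ : List ℕ → ℕ → ℝ) (hθ : Admissible θ t)
    (v : List ℕ) (j : ℕ) (hj : j < degree t v) :
    invFill t (etaF θ t) v j = θ v j := by
  induction t generalizing θ v j with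
  | leaf => simp only [degree] at hj; omega
  | node κ hκ c ih =>
      cases v with
      | cons a w =>
          have ha : a < κ := by
            by_contra hc
            simp only [degree, dif_neg hc] at hj
            omega
          simp only [degree, dif_pos ha] at hj
          rw [invFill, dif_pos ha, shift_etaF κ hκ c θ a ha]
          exact ih ⟨a, ha⟩ _ (hθ.2.2 ⟨a, ha⟩) w j hj
      | nil =>
          simp only [degree] at hj
          set η := etaF θ (.node κ hκ c) with hη
          have hIoo := hθ.1
          have hsum1 := hθ.2.1
          have hsubadm := hθ.2.2
          have hNroot_pos : 0 < N θ (.node κ hκ c) := N_pos_admissible _ _ hθ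
          have hNa : ∀ (n : ℕ) (hn : n < κ), 0 < N (shift θ [n]) (c ⟨n, hn⟩) :=
            fun n hn => N_pos_admissible _ _ (hsubadm ⟨n, hn⟩)
          have hNch : ∀ (n : ℕ) (hn : n < κ),
              Ninv (c ⟨n, hn⟩) (shift η [n]) = N (shift θ [n]) (c ⟨n, hn⟩) := by
            intro n hn
            rw [hη, shift_etaF κ hκ c θ n hn, ← N_invFill]
            exact N_congr _ _ _ (fun v j hj => ih ⟨n, hn⟩ _ (hsubadm ⟨n, hn⟩) v j hj)
          have hηval : ∀ (n : ℕ) (hn2 : n + 1 < κ),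
              Real.exp (η [] n)
                = θ [] n * N (shift θ [n]) (c ⟨n, by omega⟩) / N θ (.node κ hκ c) := by
            intro n hn
            have hn' : n < κ := by omega
            have hNvn : Nvert θ (.node κ hκ c) ([] ++ [n]) = N (shift θ [n]) (c ⟨n, hn'⟩) := by
              unfold Nvert
              rw [List.nil_append, show subtreeAt (Tree.node κ hκ c) [n] = c ⟨n, hn'⟩ from by
                rw [subtreeAt, dif_pos hn', subtreeAt_nil]]
            have hNv0 : Nvert θ (.node κ hκ c) [] = N θ (.node κ hκ c) := by
              unfold Nvert; rw [shift_nil, subtreeAt_nil]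
            rw [hη]
            simp only [etaF]
            rw [if_pos (show n + 1 < degree (Tree.node κ hκ c) [] from hn), hNvn, hNv0]
            rw [Real.exp_log]
            exact div_pos (mul_pos (hIoo ⟨n, hn'⟩).1 (hNa n hn')) hNroot_pos
          have hθlast_pos : 0 < θ [] (κ - 1) := (hIoo ⟨κ - 1, by omega⟩).1
          have hNroot : N θ (.node κ hκ c)
              = θ [] (κ - 1) * N (shift θ [κ - 1]) (c ⟨κ - 1, by omega⟩) := by rw [N]
          have hsumrange : ∑ n ∈ Finset.range κ, θ [] n = 1 := by
            rw [← Fin.sum_univ_eq_sum_range (fun n => θ [] n) κ]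
            exact hsum1
          have hsum2 : ∑ n ∈ Finset.range (κ - 1), θ [] n = 1 - θ [] (κ - 1) := by
            have hsplit : κ - 1 + 1 = κ := by omega
            have hss := Finset.sum_range_succ (fun n => θ [] n) (κ - 1)
            rw [hsplit] at hss
            rw [hss] at hsumrange
            linarith
          have hD : Dinv κ hκ c η = 1 / θ [] (κ - 1) := by
            unfold Dinv
            have hterm : ∀ a : Fin κ, (if a.val + 1 < κ then
                Real.exp (η [] a.val) * Ninv (c ⟨κ - 1, by omega⟩) (shift η [κ - 1]) /
                  Ninv (c a) (shift η [a.val]) else 0)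
                = (if a.val + 1 < κ then θ [] a.val / θ [] (κ - 1) else 0) := by
              intro a
              obtain ⟨n, hn⟩ := a
              dsimp only
              by_cases h : n + 1 < κ
              · rw [if_pos h, if_pos h, hηval n h, hNch (κ - 1) (by omega), hNch n hn, hNroot]
                have h1 := hNa n hn
                have h2 := hNa (κ - 1) (by omega)
                field_simp
              · rw [if_neg h, if_neg h]
            rw [Finset.sum_congr rfl (fun a _ => hterm a),
              Fin.sum_univ_eq_sum_range (fun n => if n + 1 < κ then θ [] n / θ [] (κ - 1) else 0) κ]
            have hsplit : κ - 1 + 1 = κ := by omega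
            have hss := Finset.sum_range_succ
              (fun n => if n + 1 < κ then θ [] n / θ [] (κ - 1) else 0) (κ - 1)
            rw [hsplit] at hss
            rw [hss, if_neg (show ¬ (κ < κ) by omega)]
            have hconv : ∀ n ∈ Finset.range (κ - 1),
                (if n + 1 < κ then θ [] n / θ [] (κ - 1) else 0) = θ [] n / θ [] (κ - 1) := by
              intro n hn
              rw [Finset.mem_range] at hn
              rw [if_pos (by omega)]
            rw [Finset.sum_congr rfl hconv, ← Finset.sum_div, hsum2]
            field_simp
            ring
          by_cases hj2 : j + 1 < κ
          · rw [invFill, dif_pos hj2, hηval j hj2, hNch (κ - 1) (by omega),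
              hNch j (by omega), hD, hNroot]
            have h1 := hNa j (by omega : j < κ)
            have h2 := hNa (κ - 1) (by omega : κ - 1 < κ)
            field_simp
          · have hj3 : j = κ - 1 := by omega
            subst hj3
            rw [invFill_node_last, hD, one_div_one_div]

theorem degree_cases (t : Tree) (v : List ℕ) : degree t v = 0 ∨ 2 ≤ degree t v := by
  induction t generalizing v with
  | leaf => left; rfl
  | node κ hκ c ih =>
      cases v with
      | nil => right; exact hκ
      | cons a w =>
          by_cases ha : a < κ
          · simpa only [degree, dif_pos ha] using ih ⟨a, ha⟩ w
          · left; simp only [degree, dif_neg ha]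

/-- The canonical parameters of the subtree coordinates, extended by `0`. -/
noncomputable def toEta (T : Tree) {d : ℕ} (e : Fin d ≃ FreeCoord T) (z : Fin d → ℝ) :
    List ℕ → ℕ → ℝ := fun v j =>
  if h : j + 1 < degree T v then z (e.symm ⟨(v, j), h⟩) else 0

/-- The global inverse of the canonical parameter map. -/
noncomputable def gMap (T : Tree) {d : ℕ} (e : Fin d ≃ FreeCoord T) (z : Fin d → ℝ) :
    Fin d → ℝ := fun i => invFill T (toEta T e z) (e i).val.1 (e i).val.2

theorem sum_free (T : Tree) {d : ℕ} (e : Fin d ≃ FreeCoord T) (v : List ℕ) (G : ℕ → ℝ) :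
    (∑ i : Fin d, if (e i).val.1 = v then G (e i).val.2 else 0)
      = ∑ j ∈ Finset.range (degree T v - 1), G j := by
  classical
  rw [← Finset.sum_filter]
  refine Finset.sum_bij' (fun a _ => (e a).val.2)
    (fun n hn => e.symm ⟨(v, n), by
      rw [Finset.mem_range] at hn
      show n + 1 < degree T v
      omega⟩) ?_ ?_ ?_ ?_ ?_
  · intro a ha
    rw [Finset.mem_filter] at ha
    have h2 := (e a).property
    rw [ha.2] at h2
    rw [Finset.mem_range]
    omega
  · intro n hn
    simp
  · intro a ha
    rw [Finset.mem_filter] at ha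
    have hq : (⟨(v, (e a).val.2), by
        show (e a).val.2 + 1 < degree T v
        have h2 := (e a).property
        rw [ha.2] at h2
        exact h2⟩ : FreeCoord T) = e a := by
      apply Subtype.ext
      exact Prod.ext ha.2.symm rfl
    rw [hq, Equiv.symm_apply_apply]
  · intro n hn
    simp
  · intro a ha
    rfl

theorem fill_gMap (T : Tree) {d : ℕ} (e : Fin d ≃ FreeCoord T) (z : Fin d → ℝ) :
    fill T e (gMap T e z) = invFill T (toEta T e z) := by
  funext v j
  simp only [fill]
  by_cases h1 : j + 1 < degree T v
  · rw [dif_pos h1]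
    show invFill T (toEta T e z) (e (e.symm ⟨(v, j), h1⟩)).val.1
        (e (e.symm ⟨(v, j), h1⟩)).val.2 = _
    rw [Equiv.apply_symm_apply]
  · rw [dif_neg h1]
    by_cases h2 : j + 1 = degree T v
    · rw [if_pos h2]
      have hdeg2 : 2 ≤ degree T v := by
        rcases degree_cases T v with h | h
        · omega
        · exact h
      have hsum : (∑ i : Fin d, if (e i).val.1 = v then gMap T e z i else 0)
          = ∑ n ∈ Finset.range (degree T v - 1), invFill T (toEta T e z) v n := by
        rw [← sum_free T e v (fun n => invFill T (toEta T e z) v n)]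
        apply Finset.sum_congr rfl
        intro i _
        by_cases hv : (e i).val.1 = v
        · rw [if_pos hv, if_pos hv]
          show invFill T (toEta T e z) (e i).val.1 (e i).val.2 = _
          rw [hv]
        · rw [if_neg hv, if_neg hv]
      rw [hsum, invFill_sum T (toEta T e z) v (degree T v) rfl hdeg2]
      have hj : j = degree T v - 1 := by omega
      rw [hj]
      ring
    · rw [if_neg h2]
      exact (invFill_zero T (toEta T e z) v j (by omega)).symm

theorem gMap_mem_Theta0 (T : Tree) {d : ℕ} (e : Fin d ≃ FreeCoord T) (z : Fin d → ℝ) :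
    gMap T e z ∈ Theta0 T e := by
  show Admissible (fill T e (gMap T e z)) T
  rw [fill_gMap]
  exact Admissible_invFill T _

theorem etaMap_gMap (T : Tree) {d : ℕ} (e : Fin d ≃ FreeCoord T) (z : Fin d → ℝ) :
    etaMap T e (gMap T e z) = z := by
  funext i
  simp only [etaMap, fill_gMap]
  set η := toEta T e z with hηdef
  set v := (e i).val.1 with hvdef
  set j := (e i).val.2 with hjdef
  have hfree : j + 1 < degree T v := (e i).property
  have hNv : Nvert (invFill T η) T v = Ninv (subtreeAt T v) (shift η v) := by
    unfold Nvert
    rw [shift_invFill_gen, N_invFill]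
  have hNvj : Nvert (invFill T η) T (v ++ [j])
      = Ninv (subtreeAt (subtreeAt T v) [j]) (shift (shift η v) [j]) := by
    unfold Nvert
    rw [shift_invFill_gen, N_invFill, subtreeAt_append, ← shift_shift]
  have hval : invFill T η v j = invFill (subtreeAt T v) (shift η v) [] j := by
    rw [← shift_invFill_gen]
    show _ = invFill T η (v ++ []) j
    rw [List.append_nil]
  rw [hNv, hNvj, hval]
  have hdeg : degree T v = degree (subtreeAt T v) [] := degree_subtreeAt T v
  have hηv : shift η v [] j = z i := by
    show η (v ++ []) j = z i
    rw [List.append_nil, hηdef]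
    show (if h : j + 1 < degree T v then z (e.symm ⟨(v, j), h⟩) else 0) = z i
    rw [dif_pos hfree]
    have hq : (⟨(v, j), hfree⟩ : FreeCoord T) = e i := Subtype.ext rfl
    rw [hq, Equiv.symm_apply_apply]
  set η' := shift η v with hη'def
  cases ht' : subtreeAt T v with
  | leaf =>
      rw [ht'] at hdeg
      simp only [degree] at hdeg
      omega
  | node κ hκ c =>
      rw [ht'] at hdeg
      have hjκ : j + 1 < κ := by
        simp only [degree] at hdeg
        omega
      have hsub : subtreeAt (Tree.node κ hκ c) [j] = c ⟨j, by omega⟩ := by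
        rw [subtreeAt, dif_pos (show j < κ by omega), subtreeAt_nil]
      rw [hsub, invFill, dif_pos hjκ, Ninv_node]
      have hNl : 0 < Ninv (c ⟨κ - 1, by omega⟩) (shift η' [κ - 1]) := Ninv_pos _ _
      have hNj : 0 < Ninv (c ⟨j, by omega⟩) (shift η' [j]) := Ninv_pos _ _
      have hD : 0 < Dinv κ hκ c η' := Dinv_pos κ hκ c η'
      have harg : Real.exp (η' [] j) * Ninv (c ⟨κ - 1, by omega⟩) (shift η' [κ - 1]) /
            Ninv (c ⟨j, by omega⟩) (shift η' [j]) / Dinv κ hκ c η' *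
            Ninv (c ⟨j, by omega⟩) (shift η' [j]) /
            (1 / Dinv κ hκ c η' * Ninv (c ⟨κ - 1, by omega⟩) (shift η' [κ - 1]))
          = Real.exp (η' [] j) := by
        field_simp
      rw [harg, Real.log_exp]
      exact hηv

theorem gMap_etaMap (T : Tree) {d : ℕ} (e : Fin d ≃ FreeCoord T) (y : Fin d → ℝ)
    (hy : y ∈ Theta0 T e) : gMap T e (etaMap T e y) = y := by
  funext i
  have hadm : Admissible (fill T e y) T := hy
  have hη : toEta T e (etaMap T e y) = etaF (fill T e y) T := by
    funext v j
    simp only [toEta, etaF, etaMap]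
    by_cases h : j + 1 < degree T v
    · rw [dif_pos h, if_pos h, Equiv.apply_symm_apply]
    · rw [dif_neg h, if_neg h]
  show invFill T (toEta T e (etaMap T e y)) (e i).val.1 (e i).val.2 = y i
  rw [hη, invFill_etaF T (fill T e y) hadm _ _ (by have := (e i).property; omega)]
  simp only [fill]
  rw [dif_pos (e i).property]
  have hq : (⟨((e i).val.1, (e i).val.2), (e i).property⟩ : FreeCoord T) = e i :=
    Subtype.ext rfl
  rw [hq, Equiv.symm_apply_apply]

theorem contDiff_invFill (t : Tree) {d : ℕ} (H : (Fin d → ℝ) → List ℕ → ℕ → ℝ)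
    (hH : ∀ v j, ContDiff ℝ (⊤ : ℕ∞) (fun z => H z v j)) :
    (∀ v j, ContDiff ℝ (⊤ : ℕ∞) (fun z => invFill t (H z) v j)) ∧
      ContDiff ℝ (⊤ : ℕ∞) (fun z => Ninv t (H z)) := by
  induction t generalizing H with
  | leaf =>
      constructor
      · intro v j
        have : (fun z : Fin d → ℝ => invFill Tree.leaf (H z) v j) = fun _ => 0 := rfl
        rw [this]; exact contDiff_const
      · have : (fun z : Fin d → ℝ => Ninv Tree.leaf (H z)) = fun _ => 1 := rfl
        rw [this]; exact contDiff_const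
  | node κ hκ c ih =>
      have hch : ∀ a : Fin κ,
          (∀ v j, ContDiff ℝ (⊤ : ℕ∞) (fun z => invFill (c a) (shift (H z) [a.val]) v j)) ∧
            ContDiff ℝ (⊤ : ℕ∞) (fun z => Ninv (c a) (shift (H z) [a.val])) :=
        fun a => ih a (fun z => shift (H z) [a.val]) (fun v j => hH ([a.val] ++ v) j)
      have hD : ContDiff ℝ (⊤ : ℕ∞) (fun z => Dinv κ hκ c (H z)) := by
        unfold Dinv
        apply ContDiff.add contDiff_const
        apply ContDiff.sum
        intro a _
        by_cases h : a.val + 1 < κ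
        · simp only [if_pos h]
          exact ContDiff.div
            (ContDiff.mul (Real.contDiff_exp.comp (hH [] a.val)) (hch ⟨κ - 1, by omega⟩).2)
            (hch a).2 (fun z => (Ninv_pos _ _).ne')
        · simp only [if_neg h]
          exact contDiff_const
      have hDne : ∀ z, Dinv κ hκ c (H z) ≠ 0 := fun z => (Dinv_pos _ _ _ _).ne'
      constructor
      · intro v j
        cases v with
        | nil =>
            by_cases hj : j + 1 < κ
            · have hrw : (fun z => invFill (.node κ hκ c) (H z) [] j) = fun z =>
                  (Real.exp (H z [] j) * Ninv (c ⟨κ - 1, by omega⟩) (shift (H z) [κ - 1]) /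
                    Ninv (c ⟨j, by omega⟩) (shift (H z) [j])) / Dinv κ hκ c (H z) := by
                funext z; rw [invFill, dif_pos hj]
              rw [hrw]
              exact ContDiff.div
                (ContDiff.div
                  (ContDiff.mul (Real.contDiff_exp.comp (hH [] j)) (hch ⟨κ - 1, by omega⟩).2)
                  (hch ⟨j, by omega⟩).2 (fun z => (Ninv_pos _ _).ne'))
                hD hDne
            · by_cases hj2 : j + 1 = κ
              · have hrw : (fun z => invFill (.node κ hκ c) (H z) [] j) = fun z =>
                    1 / Dinv κ hκ c (H z) := by
                  funext z; rw [invFill, dif_neg hj, if_pos hj2]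
                rw [hrw]
                exact ContDiff.div contDiff_const hD hDne
              · have hrw : (fun z => invFill (.node κ hκ c) (H z) [] j) = fun _ => 0 := by
                  funext z; rw [invFill, dif_neg hj, if_neg hj2]
                rw [hrw]
                exact contDiff_const
        | cons a w =>
            by_cases ha : a < κ
            · have hrw : (fun z => invFill (.node κ hκ c) (H z) (a :: w) j) = fun z =>
                  invFill (c ⟨a, ha⟩) (shift (H z) [a]) w j := by
                funext z; rw [invFill, dif_pos ha]
              rw [hrw]
              exact (hch ⟨a, ha⟩).1 w j
            · have hrw : (fun z => invFill (.node κ hκ c) (H z) (a :: w) j) = fun _ => 0 := by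
                funext z; rw [invFill, dif_neg ha]
              rw [hrw]
              exact contDiff_const
      · have hrw : (fun z => Ninv (.node κ hκ c) (H z)) = fun z =>
            (1 / Dinv κ hκ c (H z)) * Ninv (c ⟨κ - 1, by omega⟩) (shift (H z) [κ - 1]) := by
          funext z; rw [Ninv_node]
        rw [hrw]
        exact ContDiff.mul (ContDiff.div contDiff_const hD hDne) (hch ⟨κ - 1, by omega⟩).2

theorem contDiff_toEta (T : Tree) {d : ℕ} (e : Fin d ≃ FreeCoord T) (v : List ℕ) (j : ℕ) :
    ContDiff ℝ (⊤ : ℕ∞) (fun z : Fin d → ℝ => toEta T e z v j) := by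
  simp only [toEta]
  by_cases h : j + 1 < degree T v
  · simp only [dif_pos h]
    exact (contDiff_pi.mp contDiff_id) _
  · simp only [dif_neg h]
    exact contDiff_const

theorem contDiff_gMap (T : Tree) {d : ℕ} (e : Fin d ≃ FreeCoord T) :
    ContDiff ℝ (⊤ : ℕ∞) (gMap T e) := by
  apply contDiff_pi.mpr
  intro i
  exact (contDiff_invFill T (fun z => toEta T e z) (contDiff_toEta T e)).1 _ _

theorem contDiff_fill (T : Tree) {d : ℕ} (e : Fin d ≃ FreeCoord T) (v : List ℕ) (j : ℕ) :
    ContDiff ℝ (⊤ : ℕ∞) (fun y : Fin d → ℝ => fill T e y v j) := by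
  simp only [fill]
  by_cases h1 : j + 1 < degree T v
  · simp only [dif_pos h1]
    exact (contDiff_pi.mp contDiff_id) _
  · simp only [dif_neg h1]
    by_cases h2 : j + 1 = degree T v
    · simp only [if_pos h2]
      apply ContDiff.sub contDiff_const
      apply ContDiff.sum
      intro i _
      by_cases hv : (e i).val.1 = v
      · simp only [if_pos hv]
        exact (contDiff_pi.mp contDiff_id) _
      · simp only [if_neg hv]
        exact contDiff_const
    · simp only [if_neg h2]
      exact contDiff_const

theorem contDiff_N (t : Tree) {d : ℕ} (H : (Fin d → ℝ) → List ℕ → ℕ → ℝ)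
    (hH : ∀ v j, ContDiff ℝ (⊤ : ℕ∞) (fun y => H y v j)) :
    ContDiff ℝ (⊤ : ℕ∞) (fun y => N (H y) t) := by
  induction t generalizing H with
  | leaf =>
      have : (fun y : Fin d → ℝ => N (H y) Tree.leaf) = fun _ => 1 := rfl
      rw [this]; exact contDiff_const
  | node κ hκ c ih =>
      have hrw : (fun y : Fin d → ℝ => N (H y) (.node κ hκ c)) = fun y =>
          H y [] (κ - 1) * N (shift (H y) [κ - 1]) (c ⟨κ - 1, by omega⟩) := by
        funext y; rw [N]
      rw [hrw]
      exact ContDiff.mul (hH [] (κ - 1))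
        (ih ⟨κ - 1, by omega⟩ (fun y => shift (H y) [κ - 1]) (fun v j => hH ([κ - 1] ++ v) j))

theorem contDiff_Nvert_fill (T : Tree) {d : ℕ} (e : Fin d ≃ FreeCoord T) (u : List ℕ) :
    ContDiff ℝ (⊤ : ℕ∞) (fun y : Fin d → ℝ => Nvert (fill T e y) T u) :=
  contDiff_N (subtreeAt T u) (fun y => shift (fill T e y) u)
    (fun w j => contDiff_fill T e (u ++ w) j)

theorem Nvert_pos (T : Tree) (θ : List ℕ → ℕ → ℝ) (hθ : Admissible θ T) (u : List ℕ) :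
    0 < Nvert θ T u :=
  N_pos_admissible _ _ (Admissible_shift T θ hθ u)

theorem contDiffOn_etaMap (T : Tree) {d : ℕ} (e : Fin d ≃ FreeCoord T) :
    ContDiffOn ℝ (⊤ : ℕ∞) (etaMap T e) (Theta0 T e) := by
  apply contDiffOn_pi.mpr
  intro i
  simp only [etaMap]
  apply ContDiffOn.log
  · apply ContDiffOn.div
    · exact (ContDiff.mul (contDiff_fill T e _ _) (contDiff_Nvert_fill T e _)).contDiffOn
    · exact (contDiff_Nvert_fill T e _).contDiffOn
    · intro y hy
      exact (Nvert_pos T _ hy _).ne'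
  · intro y hy
    have hadm : Admissible (fill T e y) T := hy
    have h1 : 0 < fill T e y (e i).val.1 (e i).val.2 :=
      (Admissible_mem_Ioo T _ hadm _ _ (by have := (e i).property; omega)).1
    have h2 : 0 < Nvert (fill T e y) T ((e i).val.1 ++ [(e i).val.2]) :=
      Nvert_pos T _ hadm _
    have h3 : 0 < Nvert (fill T e y) T (e i).val.1 := Nvert_pos T _ hadm _
    exact (div_pos (mul_pos h1 h2) h3).ne'

/-- Proposition 1, regularity. The map `η : Θ_T → ℝ^d` with
coordinates `η_{ij}(θ) = log(θ_{ij} N_{ij}(θ)/N_i(θ))` is a diffeomorphism onto `ℝ^d`: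
it is smooth on `Θ_T`, bijective from `Θ_T` onto all of `ℝ^d`, and it has a smooth
inverse.  In particular the natural parameter space is all of `ℝ^d`, so the
probability tree model is a regular exponential family of dimension
`d = Σ_i (κ_i - 1)`. -/
theorem eta_is_diffeomorphism_onto_Rd (T : Tree) (d : ℕ) (e : Fin d ≃ FreeCoord T) :
    ContDiffOn ℝ (⊤ : ℕ∞) (etaMap T e) (Theta0 T e) ∧
    Set.BijOn (etaMap T e) (Theta0 T e) Set.univ ∧
    ∃ g : (Fin d → ℝ) → (Fin d → ℝ),
      ContDiff ℝ (⊤ : ℕ∞) g ∧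
      (∀ y ∈ Theta0 T e, g (etaMap T e y) = y) ∧
      (∀ z : Fin d → ℝ, g z ∈ Theta0 T e ∧ etaMap T e (g z) = z) := by
  refine ⟨contDiffOn_etaMap T e,
    ⟨fun y _ => Set.mem_univ _, ?_, ?_⟩,
    gMap T e, contDiff_gMap T e, gMap_etaMap T e,
    fun z => ⟨gMap_mem_Theta0 T e z, etaMap_gMap T e z⟩⟩
  · intro y1 h1 y2 h2 heq
    rw [← gMap_etaMap T e y1 h1, ← gMap_etaMap T e y2 h2, heq]
  · intro z _
    exact ⟨gMap T e z, gMap_mem_Theta0 T e z, etaMap_gMap T e z⟩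

end StagedTrees
end

section
/- (Integrality of exponents, used in the proof of Proposition 2) Let g and h be real polynomials in m variables with h not identically zero on the open positive orthant, let c be a nonzero real number and β_1,…,β_m real numbers. If g(x)/h(x) = c · ∏_{a=1}^m x_a^{β_a} for all x = (x_1,…,x_m) with all coordinates positive and h(x) ≠ 0, then every exponent β_a is an integer. -/
open Polynomial Filter Asymptotics


/-- integrality of exponents, used in the proof of Proposition 2.
Let `g` and `h` be real polynomials in `m` variables, with `h` not identically zero on
the open positive orthant, let `c ≠ 0` and `β₁, …, β_m` be real numbers.  If
`g(x)/h(x) = c · ∏_a x_a ^ β_a` (real powers) for all `x` in the positive orthant with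
`h(x) ≠ 0`, then every exponent `β_a` is an integer. -/
theorem integrality_of_exponents (m : ℕ) (g h : MvPolynomial (Fin m) ℝ)
    (c : ℝ) (β : Fin m → ℝ) (hc : c ≠ 0)
    (hh : ∃ x : Fin m → ℝ, (∀ a, 0 < x a) ∧ MvPolynomial.eval x h ≠ 0)
    (heq : ∀ x : Fin m → ℝ, (∀ a, 0 < x a) → MvPolynomial.eval x h ≠ 0 →
      MvPolynomial.eval x g / MvPolynomial.eval x h = c * ∏ a, (x a) ^ (β a)) :
    ∀ a, ∃ z : ℤ, β a = (z : ℝ) := by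
  obtain ⟨x₀, hx₀pos, hx₀⟩ := hh
  intro a
  classical
  -- substitution map
  set F : Fin m → Polynomial ℝ := fun b => if b = a then Polynomial.X else Polynomial.C (x₀ b)
    with hF
  have key : ∀ (p : MvPolynomial (Fin m) ℝ) (t : ℝ),
      Polynomial.eval t (MvPolynomial.aeval F p)
        = MvPolynomial.eval (Function.update x₀ a t) p := by
    intro p t
    rw [MvPolynomial.aeval_def, ← Polynomial.coe_evalRingHom, MvPolynomial.eval₂_comp_left]
    have h1 : (Polynomial.evalRingHom t).comp (algebraMap ℝ (Polynomial ℝ)) = RingHom.id ℝ := by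
      ext r; simp
    rw [h1]
    have h2 : (⇑(Polynomial.evalRingHom t)) ∘ F = Function.update x₀ a t := by
      funext b
      rcases eq_or_ne b a with rfl | hba
      · simp [F]
      · simp [F, hba, Function.update_of_ne hba]
    rw [h2, MvPolynomial.eval₂_id]
  set G : Polynomial ℝ := MvPolynomial.aeval F g with hG
  set H : Polynomial ℝ := MvPolynomial.aeval F h with hH
  set Cst : ℝ := c * ∏ b ∈ Finset.univ.erase a, (x₀ b) ^ (β b) with hCst
  have hCstpos : Cst ≠ 0 := by
    apply mul_ne_zero hc
    exact Finset.prod_ne_zero_iff.2 fun b _ => (Real.rpow_pos_of_pos (hx₀pos b) _).ne'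
  -- the one-variable identity
  have main : ∀ t : ℝ, 0 < t → Polynomial.eval t H ≠ 0 →
      Polynomial.eval t G / Polynomial.eval t H = Cst * t ^ (β a) := by
    intro t ht hHt
    have hxpos : ∀ b, 0 < Function.update x₀ a t b := by
      intro b
      rcases eq_or_ne b a with rfl | hba
      · simpa using ht
      · simpa [Function.update_of_ne hba] using hx₀pos b
    have hhne : MvPolynomial.eval (Function.update x₀ a t) h ≠ 0 := by
      rw [← key]; exact hHt
    have := heq _ hxpos hhne
    rw [key, key, this]
    have hprod : ∏ b, (Function.update x₀ a t b) ^ (β b)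
        = t ^ (β a) * ∏ b ∈ Finset.univ.erase a, (x₀ b) ^ (β b) := by
      rw [← Finset.mul_prod_erase Finset.univ _ (Finset.mem_univ a)]
      congr 1
      · simp
      · apply Finset.prod_congr rfl
        intro b hb
        rw [Function.update_of_ne (Finset.ne_of_mem_erase hb)]
    rw [hprod, hCst]; ring
  -- H and G are nonzero
  have hHx : Polynomial.eval (x₀ a) H ≠ 0 := by
    rw [key, Function.update_eq_self]; exact hx₀
  have hHne : H ≠ 0 := fun h0 => hHx (by rw [h0]; simp)
  have hGne : G ≠ 0 := by
    intro h0
    have := main (x₀ a) (hx₀pos a) hHx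
    rw [h0] at this
    simp only [Polynomial.eval_zero, zero_div] at this
    exact (mul_ne_zero hCstpos (Real.rpow_pos_of_pos (hx₀pos a) _).ne') this.symm
  -- asymptotics
  set z : ℤ := (G.natDegree : ℤ) - (H.natDegree : ℤ) with hz
  set L : ℝ := G.leadingCoeff / H.leadingCoeff with hL
  have hLne : L ≠ 0 :=
    div_ne_zero (Polynomial.leadingCoeff_ne_zero.2 hGne) (Polynomial.leadingCoeff_ne_zero.2 hHne)
  have hequiv : (fun t => Polynomial.eval t G / Polynomial.eval t H * t ^ (-z))
      ~[atTop] (fun t => (G.leadingCoeff * t ^ G.natDegree) / (H.leadingCoeff * t ^ H.natDegree)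
        * t ^ (-z)) :=
    ((G.isEquivalent_atTop_lead.div H.isEquivalent_atTop_lead).mul
      (IsEquivalent.refl (u := fun t : ℝ => t ^ (-z))))
  have hconst : (fun t : ℝ => (G.leadingCoeff * t ^ G.natDegree)
      / (H.leadingCoeff * t ^ H.natDegree) * t ^ (-z)) =ᶠ[atTop] Function.const ℝ L := by
    filter_upwards [eventually_gt_atTop (0 : ℝ)] with t ht
    have ht0 : t ≠ 0 := ht.ne'
    have e1 : (t : ℝ) ^ G.natDegree = t ^ (G.natDegree : ℤ) := (zpow_natCast t _).symm
    have e2 : (t : ℝ) ^ H.natDegree = t ^ (H.natDegree : ℤ) := (zpow_natCast t _).symm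
    simp only [Function.const]
    have e3 : t ^ (-z) = t ^ (H.natDegree : ℤ) / t ^ (G.natDegree : ℤ) := by
      rw [hz, neg_sub, zpow_sub₀ ht0]
    have hhl : H.leadingCoeff ≠ 0 := Polynomial.leadingCoeff_ne_zero.2 hHne
    rw [e1, e2, e3, hL]
    have hA : t ^ (G.natDegree : ℤ) ≠ 0 := zpow_ne_zero _ ht0
    have hB : t ^ (H.natDegree : ℤ) ≠ 0 := zpow_ne_zero _ ht0
    field_simp
  have htend : Tendsto (fun t => Polynomial.eval t G / Polynomial.eval t H * t ^ (-z))
      atTop (nhds L) :=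
    (isEquivalent_const_iff_tendsto hLne).1 (hequiv.trans hconst.isEquivalent)
  -- rewrite as Cst * t ^ (β a - z)
  have heq2 : (fun t : ℝ => Polynomial.eval t G / Polynomial.eval t H * t ^ (-z))
      =ᶠ[atTop] (fun t : ℝ => Cst * t ^ (β a - (z : ℝ))) := by
    filter_upwards [eventually_gt_atTop (0 : ℝ), H.eventually_no_roots hHne] with t ht hroot
    rw [main t ht hroot, mul_assoc]
    congr 1
    rw [← Real.rpow_intCast t (-z), ← Real.rpow_add ht]
    push_cast
    ring_nf
  have htend2 : Tendsto (fun t : ℝ => Cst * t ^ (β a - (z : ℝ))) atTop (nhds L) :=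
    htend.congr' heq2
  have htend3 : Tendsto (fun t : ℝ => t ^ (β a - (z : ℝ))) atTop (nhds (Cst⁻¹ * L)) := by
    have := htend2.const_mul Cst⁻¹
    refine this.congr ?_
    intro t
    rw [inv_mul_cancel_left₀ hCstpos]
  rcases lt_trichotomy (β a - (z : ℝ)) 0 with hlt | heq0 | hgt
  · exfalso
    have : Tendsto (fun t : ℝ => t ^ (β a - (z : ℝ))) atTop (nhds 0) := by
      have := tendsto_rpow_neg_atTop (neg_pos.2 hlt)
      simpa using this
    have h0 : Cst⁻¹ * L = 0 := tendsto_nhds_unique htend3 this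
    exact (mul_ne_zero (inv_ne_zero hCstpos) hLne) h0
  · exact ⟨z, by linarith⟩
  · exact absurd (tendsto_rpow_atTop hgt)
      (htend3.not_tendsto (disjoint_nhds_atTop _))
end
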